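/- Let k be a positive even integer, L a symmetric m×m integer matrix, and U an m×m integer matrix with det U = ±1 such that Uᵀ L U is block diagonal with upper-left block a symmetric ρ×ρ integer matrix L_reg and lower-right (m−ρ)×(m−ρ) block zero (and zero off-diagonal blocks). Then ∑_{g ∈ {0,…,k−1}^m} exp((π i/k)·gᵀ L g) = k^{m−ρ} · ∑_{h ∈ {0,…,k−1}^ρ} exp((π i/k)·hᵀ L_reg h). -/

import Mathlib

/-!
For even `k` and symmetric `L`, the phase `exp (π i xᵀ L x / k)` depends only on `x mod k`,
since `(x + k d)ᵀ L (x + k d) - xᵀ L x = 2k dᵀ L x + k² dᵀ L d` is divisible by `2k`. The Gauss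
sum is therefore a sum over `(ℤ/k)^m`, on which `U` acts bijectively because `det U = ±1`.
Substituting `g = U h` turns `L` into `Uᵀ L U = diag(L_reg, 0)`, whose phase ignores the last
`m - ρ` coordinates of `h`; summing them out gives the factor `k^(m-ρ)`.
-/

open Matrix

section QuadraticForm

variable {ι R : Type*} [Fintype ι] [CommRing R]

theorem dotProduct_mulVec_mulVec_eq (U L : Matrix ι ι R) (x : ι → R) :
    U *ᵥ x ⬝ᵥ L *ᵥ (U *ᵥ x) = x ⬝ᵥ (Uᵀ * L * U) *ᵥ x := by
  rw [← mulVec_mulVec, ← mulVec_mulVec, dotProduct_mulVec x Uᵀ, vecMul_transpose]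

theorem dotProduct_fromBlocks_zero_mulVec {κ : Type*} [Fintype κ] (A : Matrix ι ι R)
    (x : ι ⊕ κ → R) :
    x ⬝ᵥ fromBlocks A 0 0 (0 : Matrix κ κ R) *ᵥ x = x ∘ Sum.inl ⬝ᵥ A *ᵥ (x ∘ Sum.inl) := by
  simp [fromBlocks_mulVec, dotProduct, Fintype.sum_sum_type]

theorem dotProduct_mulVec_add_smul {L : Matrix ι ι R} (hL : L.IsSymm) (x d : ι → R) (c : R) :
    (x + c • d) ⬝ᵥ L *ᵥ (x + c • d)
      = x ⬝ᵥ L *ᵥ x + 2 * c * (d ⬝ᵥ L *ᵥ x) + c ^ 2 * (d ⬝ᵥ L *ᵥ d) := by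
  have hswap : x ⬝ᵥ L *ᵥ d = d ⬝ᵥ L *ᵥ x := by
    conv_lhs => rw [← hL]
    rw [dotProduct_mulVec, vecMul_transpose, dotProduct_comm]
  simp only [mulVec_add, mulVec_smul, dotProduct_add, add_dotProduct, smul_dotProduct,
    dotProduct_smul, smul_eq_mul, hswap]
  ring

end QuadraticForm

theorem two_mul_dvd_dotProduct_mulVec_sub {ι : Type*} [Fintype ι] {k : ℤ} (hk : Even k)
    {L : Matrix ι ι ℤ} (hL : L.IsSymm) {x y : ι → ℤ} (hxy : ∀ i, k ∣ x i - y i) :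
    2 * k ∣ x ⬝ᵥ L *ᵥ x - y ⬝ᵥ L *ᵥ y := by
  choose d hd using hxy
  obtain ⟨t, rfl⟩ := hk
  have hx : x = y + (t + t) • d := funext fun i => by simp [← hd i]
  rw [hx, dotProduct_mulVec_add_smul hL]
  exact ⟨d ⬝ᵥ L *ᵥ y + t * (d ⬝ᵥ L *ᵥ d), by ring⟩

theorem exp_pi_mul_I_div_mul_eq_of_dvd {k : ℕ} (hk : k ≠ 0) {a b : ℤ}
    (hab : 2 * (k : ℤ) ∣ a - b) :
    Complex.exp (Real.pi * Complex.I / k * a) = Complex.exp (Real.pi * Complex.I / k * b) := by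
  obtain ⟨c, hc⟩ := hab
  rw [Complex.exp_eq_exp_iff_exists_int]
  refine ⟨c, ?_⟩
  rw [show (a : ℂ) = b + 2 * k * c by exact_mod_cast (by linarith : a = b + 2 * k * c)]
  field_simp

section GaussPhase

variable {ι : Type*} [Fintype ι]

noncomputable def gaussPhase (k : ℕ) (L : Matrix ι ι ℤ) (x : ι → ℤ) : ℂ :=
  Complex.exp (Real.pi * Complex.I / k * ((x ⬝ᵥ L *ᵥ x : ℤ) : ℂ))

theorem gaussPhase_eq_of_modEq {k : ℕ} (hk : k ≠ 0) (hke : Even k) {L : Matrix ι ι ℤ}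
    (hL : L.IsSymm) {x y : ι → ℤ} (hxy : ∀ i, (x i : ZMod k) = y i) :
    gaussPhase k L x = gaussPhase k L y :=
  exp_pi_mul_I_div_mul_eq_of_dvd hk <|
    two_mul_dvd_dotProduct_mulVec_sub (by exact_mod_cast hke) hL
      fun i => (ZMod.intCast_eq_intCast_iff_dvd_sub _ _ _).mp (hxy i).symm

theorem gaussPhase_mulVec (k : ℕ) (L U : Matrix ι ι ℤ) (x : ι → ℤ) :
    gaussPhase k L (U *ᵥ x) = gaussPhase k (Uᵀ * L * U) x := by
  rw [gaussPhase, dotProduct_mulVec_mulVec_eq, gaussPhase]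

theorem gaussPhase_fromBlocks_zero {κ : Type*} [Fintype κ] (k : ℕ) (A : Matrix ι ι ℤ)
    (x : ι ⊕ κ → ℤ) :
    gaussPhase k (fromBlocks A 0 0 (0 : Matrix κ κ ℤ)) x = gaussPhase k A (x ∘ Sum.inl) := by
  rw [gaussPhase, dotProduct_fromBlocks_zero_mulVec, gaussPhase]

end GaussPhase

section SumOverZMod

variable {ι M : Type*} [Fintype ι] [DecidableEq ι] [AddCommMonoid M]

theorem sum_fin_eq_sum_zmod_val (k : ℕ) [NeZero k] (f : (ι → ℤ) → M) :
    ∑ g : ι → Fin k, f (fun i => ((g i : ℕ) : ℤ))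
      = ∑ z : ι → ZMod k, f (fun i => ((z i).val : ℤ)) := by
  obtain ⟨n, rfl⟩ := Nat.exists_eq_succ_of_ne_zero (NeZero.ne k)
  -- `ZMod (n + 1)` is `Fin (n + 1)` by definition, with `ZMod.val` the coercion to `ℕ`.
  rfl

theorem sum_val_mulVec_eq {k : ℕ} [NeZero k] {f : (ι → ℤ) → M}
    (hf : ∀ x y : ι → ℤ, (∀ i, (x i : ZMod k) = y i) → f x = f y)
    {U : Matrix ι ι ℤ} (hU : IsUnit (U.det : ZMod k)) :
    ∑ z : ι → ZMod k, f (U *ᵥ fun i => ((z i).val : ℤ))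
      = ∑ z : ι → ZMod k, f (fun i => ((z i).val : ℤ)) := by
  set A := U.map (Int.cast : ℤ → ZMod k)
  have hA : A.mulVec.Bijective := by
    refine Function.Surjective.bijective_of_finite (mulVec_surjective_iff_isUnit.mpr ?_)
    rwa [isUnit_iff_isUnit_det, ← Int.cast_det]
  calc ∑ z : ι → ZMod k, f (U *ᵥ fun i => ((z i).val : ℤ))
      = ∑ z : ι → ZMod k, f (fun i => ((A *ᵥ z) i).val) :=
        Finset.sum_congr rfl fun z _ => hf _ _ fun i => by simp [A, mulVec, dotProduct]
    _ = ∑ z : ι → ZMod k, f (fun i => (z i).val) := hA.sum_comp fun z => f fun i => (z i).val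

theorem sum_comp_inl {κ α : Type*} [Fintype κ] [DecidableEq κ] [Fintype α] (f : (ι → α) → M) :
    ∑ z : ι ⊕ κ → α, f (z ∘ Sum.inl) = Fintype.card α ^ Fintype.card κ • ∑ x, f x := by
  rw [← (Equiv.sumArrowEquivProdArrow ι κ α).symm.sum_comp, Fintype.sum_prod_type_right]
  have hinl (x : ι → α) (y : κ → α) :
      (Equiv.sumArrowEquivProdArrow ι κ α).symm (x, y) ∘ Sum.inl = x := rfl
  simp only [hinl, Finset.sum_const, Finset.card_univ, Fintype.card_fun]

end SumOverZMod

theorem gauss_sum_null_factorization_general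
    (k : ℕ) (hk : 0 < k) (hke : Even k)
    (ρ ν : ℕ)
    (L U : Matrix (Fin ρ ⊕ Fin ν) (Fin ρ ⊕ Fin ν) ℤ)
    (hL : L.IsSymm)
    (hU : U.det = 1 ∨ U.det = -1)
    (Lreg : Matrix (Fin ρ) (Fin ρ) ℤ)
    (hblock : Uᵀ * L * U = Matrix.fromBlocks Lreg 0 0 0) :
    (∑ g : (Fin ρ ⊕ Fin ν) → Fin k,
        Complex.exp ((Real.pi : ℂ) * Complex.I / (k : ℂ) *
          ((((fun i => ((g i : ℕ) : ℤ)) ⬝ᵥ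
              L.mulVec fun i => ((g i : ℕ) : ℤ)) : ℤ) : ℂ)))
      = (k : ℂ) ^ ν *
          ∑ h : Fin ρ → Fin k,
            Complex.exp ((Real.pi : ℂ) * Complex.I / (k : ℂ) *
              ((((fun i => ((h i : ℕ) : ℤ)) ⬝ᵥ
                  Lreg.mulVec fun i => ((h i : ℕ) : ℤ)) : ℤ) : ℂ)) := by
  have : NeZero k := ⟨hk.ne'⟩
  have hUk : IsUnit (U.det : ZMod k) := (Int.isUnit_iff.mpr hU).map (Int.castRingHom _)
  change ∑ g : _ → Fin k, gaussPhase k L _ = (k : ℂ) ^ ν * ∑ h : _ → Fin k, gaussPhase k Lreg _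
  rw [sum_fin_eq_sum_zmod_val, sum_fin_eq_sum_zmod_val,
    ← sum_val_mulVec_eq (fun _ _ => gaussPhase_eq_of_modEq hk.ne' hke hL) hUk]
  simp only [gaussPhase_mulVec, hblock, gaussPhase_fromBlocks_zero]
  refine (sum_comp_inl
    fun y : Fin ρ → ZMod k => gaussPhase k Lreg fun i => ((y i).val : ℤ)).trans ?_
  simp [ZMod.card, nsmul_eq_mul]

/-- **Factorization of the degenerate Gauss sum over the null directions.**
If `Uᵀ L U` is block diagonal with nondegenerate-free upper-left block `L_reg`
of size `ρ` and zero lower-right block of size `ν` (so `m = ρ + ν`), then the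
level-`k` Gauss sum of `L` equals `k^ν` times the Gauss sum of `L_reg`. -/
theorem gauss_sum_null_factorization
    (k : ℕ) (hk : 0 < k) (hke : Even k)
    (ρ ν : ℕ)
    (L U : Matrix (Fin ρ ⊕ Fin ν) (Fin ρ ⊕ Fin ν) ℤ)
    (hL : L.IsSymm)
    (hU : U.det = 1 ∨ U.det = -1)
    (Lreg : Matrix (Fin ρ) (Fin ρ) ℤ) (hLreg : Lreg.IsSymm)
    (hblock : Uᵀ * L * U = Matrix.fromBlocks Lreg 0 0 0) :
    (∑ g : (Fin ρ ⊕ Fin ν) → Fin k,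
        Complex.exp ((Real.pi : ℂ) * Complex.I / (k : ℂ) *
          ((((fun i => ((g i : ℕ) : ℤ)) ⬝ᵥ
              L.mulVec fun i => ((g i : ℕ) : ℤ)) : ℤ) : ℂ)))
      = (k : ℂ) ^ ν *
          ∑ h : Fin ρ → Fin k,
            Complex.exp ((Real.pi : ℂ) * Complex.I / (k : ℂ) *
              ((((fun i => ((h i : ℕ) : ℤ)) ⬝ᵥ
                  Lreg.mulVec fun i => ((h i : ℕ) : ℤ)) : ℤ) : ℂ)) :=
  gauss_sum_null_factorization_general k hk hke ρ ν L U hL hU Lreg hblock
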